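/- Let P be a finite set of processes, B ⊆ P the Byzantine set with |B| ≤ f, and val : P → Option V a partial assignment where val p is the value attested by the L1 proof produced by p (none if p produced no L1 proof). Suppose all correct producers agree: for p, q ∉ B, if val p = some x and val q = some y then x = y. Define an L2 proof for value x to be a set S ⊆ P with |S| ≥ f + 1 such that val p = some x for all p ∈ S. Then any two L2 proofs attest the same value: if S is an L2 proof for x and T is an L2 proof for y, then x = y. -/

import Mathlib

theorem stmt_7_general {α V : Type*} (P B : Finset α) (f : ℕ)
    (hBf : B.card ≤ f) (val : α → Option V)
    (hagree : ∀ p q, p ∈ P → q ∈ P → p ∉ B → q ∉ B →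
      ∀ x y, val p = some x → val q = some y → x = y)
    (S T : Finset α) (x y : V)
    (hS : S ⊆ P) (hScard : f + 1 ≤ S.card) (hSx : ∀ p ∈ S, val p = some x)
    (hT : T ⊆ P) (hTcard : f + 1 ≤ T.card) (hTy : ∀ p ∈ T, val p = some y) :
    x = y := by
  obtain ⟨p, hpS, hpB⟩ := Finset.exists_mem_notMem_of_card_lt_card (s := B) (t := S) (by omega)
  obtain ⟨q, hqT, hqB⟩ := Finset.exists_mem_notMem_of_card_lt_card (s := B) (t := T) (by omega)
  exact hagree p q (hS hpS) (hT hqT) hpB hqB x y (hSx p hpS) (hTy q hqT)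

/-- Any two L2 proofs (sets of f+1 L1 proofs) attest the same value. -/
theorem stmt_7 {α V : Type*} [DecidableEq α] (P B : Finset α) (f : ℕ)
    (hB : B ⊆ P) (hBf : B.card ≤ f) (val : α → Option V)
    (hagree : ∀ p q, p ∈ P → q ∈ P → p ∉ B → q ∉ B →
      ∀ x y, val p = some x → val q = some y → x = y)
    (S T : Finset α) (x y : V)
    (hS : S ⊆ P) (hScard : f + 1 ≤ S.card) (hSx : ∀ p ∈ S, val p = some x)
    (hT : T ⊆ P) (hTcard : f + 1 ≤ T.card) (hTy : ∀ p ∈ T, val p = some y) :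
    x = y :=
  stmt_7_general P B f hBf val hagree S T x y hS hScard hSx hT hTcard hTy
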